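/- arXiv:1812.07883 — 2 statements merged into one kernel-verified Lean document; each statement's English description precedes it below -/
import Mathlib

section
/- Let H be exponential(1) and m the maximum of M i.i.d. exponential(1) variables, independent of H. For constants τ > 0, t > 0, c > 0, q > 0, let θ_h = max(t, τ/(c q) − 1/q). Then P(m > c(1 + qH), c(1 + qH) > τ, H > t) + P(m > τ, c(1 + qH) < τ, H > t) = e^{−θ_h} − ∑_{k=0}^{M} C(M,k)(−1)^k e^{−kc} e^{−(1 + k c q)θ_h}/(1 + k c q) + [1 − (1 − e^{−τ})^M](e^{−t} − e^{−(τ/(cq) − 1/q)}) when τ/(cq) − 1/q > t, and it equals e^{−θ_h} − ∑_{k=0}^{M} C(M,k)(−1)^k e^{−kc} e^{−(1 + k c q)θ_h}/(1 + k c q) otherwise. -/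
open MeasureTheory ProbabilityTheory
open Set Real Filter

lemma int_exp_Ioi {b : ℝ} (hb : 0 < b) (a : ℝ) :
    ∫ h in Set.Ioi a, Real.exp (-(b*h)) = Real.exp (-(b*a)) / b := by
  have hderiv : ∀ x ∈ Ici a, HasDerivAt (fun x => -Real.exp (-(b*x)) / b) (Real.exp (-(b*x))) x := by
    intro x _
    have : HasDerivAt (fun x => -(b*x)) (-b) x := by
      simpa using ((hasDerivAt_id x).const_mul b).fun_neg
    have := (this.exp).fun_neg.div_const b
    refine this.congr_deriv ?_
    field_simp
  have hint : IntegrableOn (fun x => Real.exp (-(b*x))) (Ioi a) := by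
    simpa [neg_mul] using exp_neg_integrableOn_Ioi a hb
  have htend : Tendsto (fun x => -Real.exp (-(b*x)) / b) atTop (nhds 0) := by
    have h1 : Tendsto (fun x : ℝ => -(b*x)) atTop atBot := by
      simpa [neg_mul] using tendsto_id.const_mul_atTop_of_neg (neg_neg_iff_pos.2 hb)
    have := (tendsto_exp_atBot.comp h1).neg.div_const b
    simpa using this
  have := MeasureTheory.integral_Ioi_of_hasDerivAt_of_tendsto' hderiv hint htend
  rw [this]; ring

lemma int_exp_Ioc {a b : ℝ} (hab : a ≤ b) :
    ∫ h in Set.Ioc a b, Real.exp (-h) = Real.exp (-a) - Real.exp (-b) := by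
  rw [← intervalIntegral.integral_of_le hab]
  have := intervalIntegral.integral_comp_neg (a := a) (b := b) (fun x => Real.exp x)
  rw [this, integral_exp]

lemma tail_ofReal {Ω} [MeasurableSpace Ω] (P : Measure Ω) [IsProbabilityMeasure P]
    (H : Ω → ℝ) (hHtail : ∀ x : ℝ, 0 ≤ x → (P {ω | x < H ω}).toReal = Real.exp (-x))
    {x : ℝ} (hx : 0 ≤ x) : P {ω | x < H ω} = ENNReal.ofReal (Real.exp (-x)) := by
  rw [← hHtail x hx, ENNReal.ofReal_toReal (measure_ne_top P _)]

lemma law_of_tail {Ω} [MeasurableSpace Ω] (P : Measure Ω) [IsProbabilityMeasure P]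
    (H : Ω → ℝ) (hH : Measurable H)
    (hHtail : ∀ x : ℝ, 0 ≤ x → (P {ω | x < H ω}).toReal = Real.exp (-x)) :
    P.map H = (volume.restrict (Set.Ioi 0)).withDensity
      (fun h => ENNReal.ofReal (Real.exp (-h))) := by
  have hmap : IsProbabilityMeasure (P.map H) := Measure.isProbabilityMeasure_map hH.aemeasurable
  refine Measure.ext_of_Iic _ _ (fun a => ?_)
  have hcompl : ∀ x : ℝ, P {ω | H ω ≤ x} = 1 - P {ω | x < H ω} := by
    intro x
    have : {ω | H ω ≤ x} = {ω | x < H ω}ᶜ := by ext ω; simp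
    rw [this, measure_compl (measurableSet_lt measurable_const hH) (measure_ne_top P _), measure_univ]
  have hmapIic : (P.map H) (Iic a) = P {ω | H ω ≤ a} := by
    rw [Measure.map_apply hH measurableSet_Iic]; rfl
  have hrhs : (volume.restrict (Set.Ioi 0)).withDensity
      (fun h => ENNReal.ofReal (Real.exp (-h))) (Iic a)
      = ∫⁻ h in Iic a ∩ Ioi 0, ENNReal.ofReal (Real.exp (-h)) := by
    rw [withDensity_apply _ measurableSet_Iic, Measure.restrict_restrict measurableSet_Iic]
  rcases le_or_gt 0 a with ha | ha
  · rw [hmapIic, hcompl, tail_ofReal P H hHtail ha, hrhs]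
    have hinter : Iic a ∩ Ioi 0 = Ioc 0 a := by ext x; simp [and_comm]
    rw [hinter]
    have hint : IntegrableOn (fun h => Real.exp (-h)) (Ioc 0 a) := by
      apply Continuous.integrableOn_Ioc
      exact Real.continuous_exp.comp continuous_neg
    rw [← ofReal_integral_eq_lintegral_ofReal hint
        (Filter.Eventually.of_forall fun x => (Real.exp_pos _).le),
      int_exp_Ioc ha]
    rw [← ENNReal.ofReal_one, ← ENNReal.ofReal_sub _ (Real.exp_pos _).le]
    norm_num
  · rw [hmapIic, hrhs]
    have h1 : P {ω | H ω ≤ a} ≤ P {ω | H ω ≤ 0} :=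
      measure_mono (fun ω h => le_trans h ha.le)
    have h2 : P {ω | H ω ≤ (0:ℝ)} = 0 := by
      rw [hcompl, tail_ofReal P H hHtail le_rfl]
      simp
    have hinter : Iic a ∩ Ioi 0 = (∅ : Set ℝ) := by
      ext x; simp; intro h1 ; linarith
    rw [hinter]
    simp [le_antisymm (h1.trans h2.le) zero_le]

lemma m_tail {Ω} [MeasurableSpace Ω] (P : Measure Ω) [IsProbabilityMeasure P] (M : ℕ)
    (m : Ω → ℝ) (hm : Measurable m)
    (hmcdf : ∀ x : ℝ, 0 ≤ x → (P {ω | m ω ≤ x}).toReal = (1 - Real.exp (-x)) ^ M)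
    {a : ℝ} (ha : 0 ≤ a) :
    P {ω | a < m ω} = ENNReal.ofReal (1 - (1 - Real.exp (-a)) ^ M) := by
  have hbase : 0 ≤ 1 - Real.exp (-a) := by
    have := Real.exp_le_one_iff.2 (by linarith : -a ≤ 0); linarith
  have hpow : (1 - Real.exp (-a)) ^ M ≤ 1 :=
    pow_le_one₀ hbase (by have := Real.exp_pos (-a); linarith)
  have hcdf : P {ω | m ω ≤ a} = ENNReal.ofReal ((1 - Real.exp (-a)) ^ M) := by
    rw [← hmcdf a ha, ENNReal.ofReal_toReal (measure_ne_top P _)]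
  have hset : {ω | a < m ω} = {ω | m ω ≤ a}ᶜ := by ext ω; simp
  rw [hset, measure_compl (measurableSet_le hm measurable_const) (measure_ne_top P _),
    measure_univ, hcdf, ← ENNReal.ofReal_one, ← ENNReal.ofReal_sub _ (pow_nonneg hbase M)]

lemma main_integral (M : ℕ) (c q θ : ℝ) (hc : 0 < c) (hq : 0 < q) :
    ∫ h in Set.Ioi θ, (1 - (1 - Real.exp (-(c*(1+q*h)))) ^ M) * Real.exp (-h)
      = Real.exp (-θ)
        - ∑ k ∈ Finset.range (M + 1),
            (M.choose k : ℝ) * (-1) ^ k * Real.exp (-(k : ℝ) * c) *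
              Real.exp (-(1 + (k : ℝ) * c * q) * θ) / (1 + (k : ℝ) * c * q) := by
  have hbk : ∀ k : ℕ, (0:ℝ) < 1 + (k:ℝ)*c*q := by
    intro k
    have : (0:ℝ) ≤ (k:ℝ)*c*q := by positivity
    linarith
  have hexpand : ∀ h : ℝ,
      (1 - (1 - Real.exp (-(c*(1+q*h)))) ^ M) * Real.exp (-h)
        = Real.exp (-h) - ∑ k ∈ Finset.range (M + 1),
            ((M.choose k : ℝ) * (-1) ^ k * Real.exp (-(k : ℝ) * c)) *
              Real.exp (-((1 + (k : ℝ) * c * q) * h)) := by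
    intro h
    have hpow : (1 - Real.exp (-(c*(1+q*h)))) ^ M
        = ∑ k ∈ Finset.range (M + 1),
            (-1:ℝ)^k * Real.exp (-(c*(1+q*h)))^k * (M.choose k : ℝ) := by
      have h0 := add_pow (-Real.exp (-(c*(1+q*h)))) 1 M
      rw [show (1 - Real.exp (-(c*(1+q*h)))) = -Real.exp (-(c*(1+q*h))) + 1 by ring, h0]
      apply Finset.sum_congr rfl
      intro k _
      rw [neg_pow]
      ring
    rw [hpow, sub_mul, one_mul, Finset.sum_mul]
    congr 1
    apply Finset.sum_congr rfl
    intro k _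
    have he : Real.exp (-(c*(1+q*h)))^k * Real.exp (-h)
        = Real.exp (-(k:ℝ)*c) * Real.exp (-((1 + (k : ℝ) * c * q) * h)) := by
      rw [← Real.exp_nat_mul, ← Real.exp_add, ← Real.exp_add]
      congr 1; ring
    calc (-1:ℝ)^k * Real.exp (-(c*(1+q*h)))^k * (M.choose k : ℝ) * Real.exp (-h)
        = (-1:ℝ)^k * (M.choose k : ℝ) *
            (Real.exp (-(c*(1+q*h)))^k * Real.exp (-h)) := by ring
      _ = _ := by rw [he]; ring
  have hint1 : IntegrableOn (fun h => Real.exp (-h)) (Ioi θ) := by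
    exact (exp_neg_integrableOn_Ioi θ (by norm_num : (0:ℝ) < 1)).congr_fun
      (fun x _ => by norm_num) measurableSet_Ioi
  have hintk : ∀ k : ℕ, IntegrableOn
      (fun h => ((M.choose k : ℝ) * (-1) ^ k * Real.exp (-(k : ℝ) * c)) *
        Real.exp (-((1 + (k : ℝ) * c * q) * h))) (Ioi θ) := by
    intro k
    apply Integrable.const_mul
    exact (exp_neg_integrableOn_Ioi θ (hbk k)).congr_fun
      (fun x _ => by simp only [neg_mul]) measurableSet_Ioi
  have hintsum : IntegrableOn (fun h => ∑ k ∈ Finset.range (M + 1),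
      ((M.choose k : ℝ) * (-1) ^ k * Real.exp (-(k : ℝ) * c)) *
        Real.exp (-((1 + (k : ℝ) * c * q) * h))) (Ioi θ) := by
    apply integrable_finset_sum
    intro k _
    exact hintk k
  rw [show (fun h => (1 - (1 - Real.exp (-(c*(1+q*h)))) ^ M) * Real.exp (-h)) = fun h =>
      Real.exp (-h) - ∑ k ∈ Finset.range (M + 1),
        ((M.choose k : ℝ) * (-1) ^ k * Real.exp (-(k : ℝ) * c)) *
          Real.exp (-((1 + (k : ℝ) * c * q) * h)) from funext hexpand]
  rw [integral_sub hint1 hintsum, integral_finset_sum _ (fun k _ => hintk k)]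
  have h1 : ∫ h in Set.Ioi θ, Real.exp (-h) = Real.exp (-θ) := by
    have := int_exp_Ioi (by norm_num : (0:ℝ) < 1) θ
    simp only [one_mul] at this
    rw [this, div_one]
  rw [h1]
  congr 1
  apply Finset.sum_congr rfl
  intro k _
  rw [MeasureTheory.integral_const_mul]
  have : ∫ (a : ℝ) in Set.Ioi θ, Real.exp (-((1 + (k:ℝ) * c * q) * a)) = Real.exp (-((1 + (k:ℝ)*c*q)*θ)) / (1 + (k:ℝ)*c*q) := int_exp_Ioi (hbk k) θ
  rw [this, neg_mul]
  ring

lemma prob1 {Ω : Type*} [MeasurableSpace Ω] (P : Measure Ω) [IsProbabilityMeasure P]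
    (M : ℕ) (m H : Ω → ℝ) (hm : Measurable m) (hH : Measurable H)
    (hindep : IndepFun m H P)
    (hmcdf : ∀ x : ℝ, 0 ≤ x → (P {ω | m ω ≤ x}).toReal = (1 - Real.exp (-x)) ^ M)
    (hHtail : ∀ x : ℝ, 0 ≤ x → (P {ω | x < H ω}).toReal = Real.exp (-x))
    (c q θ : ℝ) (hc : 0 < c) (hq : 0 < q) (hθ : 0 < θ) :
    P {ω | c * (1 + q * H ω) < m ω ∧ θ < H ω}
      = ENNReal.ofReal (∫ h in Set.Ioi θ,
          (1 - (1 - Real.exp (-(c*(1+q*h)))) ^ M) * Real.exp (-h)) := by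
  set S : Set (ℝ × ℝ) := {p | c * (1 + q * p.2) < p.1 ∧ θ < p.2} with hSdef
  have hmeas2 : Measurable fun p : ℝ × ℝ => c * (1 + q * p.2) := by fun_prop
  have hS : MeasurableSet S :=
    (measurableSet_lt hmeas2 measurable_fst).inter
      (measurableSet_lt measurable_const measurable_snd)
  have hev : {ω | c * (1 + q * H ω) < m ω ∧ θ < H ω}
      = (fun ω => (m ω, H ω)) ⁻¹' S := rfl
  rw [hev, ← Measure.map_apply (hm.prodMk hH) hS,
    (indepFun_iff_map_prod_eq_prod_map_map hm.aemeasurable hH.aemeasurable).1 hindep,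
    Measure.prod_apply_symm hS]
  have hmapH : IsProbabilityMeasure (P.map H) := Measure.isProbabilityMeasure_map hH.aemeasurable
  have hslice : (fun h => (P.map m) ((fun x => (x, h)) ⁻¹' S))
      = (Set.Ioi θ).indicator
          (fun h => ENNReal.ofReal (1 - (1 - Real.exp (-(c*(1+q*h)))) ^ M)) := by
    funext h
    by_cases hh : θ < h
    · have hpre : (fun x => (x, h)) ⁻¹' S = Set.Ioi (c * (1 + q * h)) := by
        ext x; simp [hSdef, Set.mem_Ioi, hh]
      have hh0 : (0:ℝ) < h := lt_trans hθ hh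
      have ha : 0 ≤ c * (1 + q * h) := by nlinarith [mul_pos hq hh0]
      rw [hpre, Set.indicator_of_mem (Set.mem_Ioi.2 hh), Measure.map_apply hm measurableSet_Ioi]
      exact m_tail P M m hm hmcdf ha
    · have hpre : (fun x => (x, h)) ⁻¹' S = (∅ : Set ℝ) := by
        ext x; simp [hSdef, hh]
      rw [hpre, Set.indicator_of_notMem (by simpa using hh)]
      simp
  have hstep : ∫⁻ h, (P.map m) ((fun x => (x, h)) ⁻¹' S) ∂(P.map H)
      = ∫⁻ h in Set.Ioi θ,
          ENNReal.ofReal (1 - (1 - Real.exp (-(c*(1+q*h)))) ^ M) ∂(P.map H) := by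
    rw [← lintegral_indicator measurableSet_Ioi]
    exact lintegral_congr fun h => congrFun hslice h
  rw [hstep, law_of_tail P H hH hHtail]
  rw [restrict_withDensity measurableSet_Ioi]
  have hg : Measurable fun h : ℝ => ENNReal.ofReal (1 - (1 - Real.exp (-(c*(1+q*h)))) ^ M) := by
    fun_prop
  rw [lintegral_withDensity_eq_lintegral_mul _ (by fun_prop) hg]
  rw [Measure.restrict_restrict measurableSet_Ioi]
  have hinter : Set.Ioi θ ∩ Set.Ioi 0 = Set.Ioi θ := by
    apply Set.inter_eq_left.2
    exact Set.Ioi_subset_Ioi hθ.le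
  rw [hinter]
  have hfg : ∀ᵐ h ∂(volume.restrict (Set.Ioi θ)),
      ((fun h => ENNReal.ofReal (Real.exp (-h))) *
        fun h => ENNReal.ofReal (1 - (1 - Real.exp (-(c*(1+q*h)))) ^ M)) h
      = ENNReal.ofReal ((1 - (1 - Real.exp (-(c*(1+q*h)))) ^ M) * Real.exp (-h)) := by
    apply Filter.Eventually.of_forall
    intro h
    simp only [Pi.mul_apply]
    rw [← ENNReal.ofReal_mul (Real.exp_pos _).le, mul_comm]
  rw [lintegral_congr_ae hfg]
  have hnn : ∀ h ∈ Set.Ioi θ, 0 ≤ (1 - (1 - Real.exp (-(c*(1+q*h)))) ^ M) * Real.exp (-h) := by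
    intro h hh
    have hh' : (0:ℝ) < h := lt_trans hθ hh
    have h1 : 0 ≤ c * (1 + q * h) := by positivity
    have h2 : Real.exp (-(c*(1+q*h))) ≤ 1 := Real.exp_le_one_iff.2 (by linarith)
    have h3 : (0:ℝ) < Real.exp (-(c*(1+q*h))) := Real.exp_pos _
    have h4 : (1 - Real.exp (-(c*(1+q*h)))) ^ M ≤ 1 := pow_le_one₀ (by linarith) (by linarith)
    have := (Real.exp_pos (-h)).le
    nlinarith
  have hcont : Continuous fun h : ℝ => (1 - (1 - Real.exp (-(c*(1+q*h)))) ^ M) * Real.exp (-h) := by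
    fun_prop
  have hint : IntegrableOn (fun h : ℝ =>
      (1 - (1 - Real.exp (-(c*(1+q*h)))) ^ M) * Real.exp (-h)) (Set.Ioi θ) := by
    have hint1 : IntegrableOn (fun h : ℝ => Real.exp (-h)) (Set.Ioi θ) := by
      exact (exp_neg_integrableOn_Ioi θ (by norm_num : (0:ℝ) < 1)).congr_fun
        (fun x _ => by norm_num) measurableSet_Ioi
    apply hint1.mono' hcont.aestronglyMeasurable
    rw [ae_restrict_iff' measurableSet_Ioi]
    apply Filter.Eventually.of_forall
    intro h hh
    have hh' : (0:ℝ) < h := lt_trans hθ hh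
    have h1 : 0 ≤ c * (1 + q * h) := by positivity
    have h2 : Real.exp (-(c*(1+q*h))) ≤ 1 := Real.exp_le_one_iff.2 (by linarith)
    have h3 : (0:ℝ) < Real.exp (-(c*(1+q*h))) := Real.exp_pos _
    have h4 : (1 - Real.exp (-(c*(1+q*h)))) ^ M ≤ 1 := pow_le_one₀ (by linarith) (by linarith)
    have h5 : 0 ≤ (1 - Real.exp (-(c*(1+q*h)))) ^ M := pow_nonneg (by linarith) M
    rw [Real.norm_eq_abs, abs_of_nonneg (hnn h hh)]
    have := (Real.exp_pos (-h)).le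
    nlinarith
  have hnn' : 0 ≤ᵐ[volume.restrict (Set.Ioi θ)] fun h : ℝ =>
      (1 - (1 - Real.exp (-(c*(1+q*h)))) ^ M) * Real.exp (-h) := by
    filter_upwards [ae_restrict_mem measurableSet_Ioi] with h hh using hnn h hh
  rw [← ofReal_integral_eq_lintegral_ofReal hint hnn']

lemma prob2 {Ω : Type*} [MeasurableSpace Ω] (P : Measure Ω) [IsProbabilityMeasure P]
    (M : ℕ) (m H : Ω → ℝ) (hm : Measurable m) (hH : Measurable H)
    (hindep : IndepFun m H P)
    (hmcdf : ∀ x : ℝ, 0 ≤ x → (P {ω | m ω ≤ x}).toReal = (1 - Real.exp (-x)) ^ M)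
    (hHtail : ∀ x : ℝ, 0 ≤ x → (P {ω | x < H ω}).toReal = Real.exp (-x))
    (τ t β : ℝ) (hτ : 0 < τ) (ht : 0 < t) (htβ : t < β) :
    P {ω | τ < m ω ∧ t < H ω ∧ H ω < β}
      = ENNReal.ofReal ((1 - (1 - Real.exp (-τ)) ^ M) * (Real.exp (-t) - Real.exp (-β))) := by
  have hset : {ω | τ < m ω ∧ t < H ω ∧ H ω < β}
      = m ⁻¹' (Set.Ioi τ) ∩ H ⁻¹' (Set.Ioo t β) := by
    ext ω; simp [Set.mem_Ioo, and_assoc]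
  rw [hset, hindep.measure_inter_preimage_eq_mul _ _ measurableSet_Ioi measurableSet_Ioo]
  have h1 : P (m ⁻¹' Set.Ioi τ) = ENNReal.ofReal (1 - (1 - Real.exp (-τ)) ^ M) :=
    m_tail P M m hm hmcdf hτ.le
  have h2 : P (H ⁻¹' Set.Ioo t β) = ENNReal.ofReal (Real.exp (-t) - Real.exp (-β)) := by
    have : P (H ⁻¹' Set.Ioo t β) = (P.map H) (Set.Ioo t β) :=
      (Measure.map_apply hH measurableSet_Ioo).symm
    rw [this, law_of_tail P H hH hHtail, withDensity_apply _ measurableSet_Ioo,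
      Measure.restrict_restrict measurableSet_Ioo]
    have hinter : Set.Ioo t β ∩ Set.Ioi 0 = Set.Ioo t β := by
      apply Set.inter_eq_left.2
      intro x hx
      exact lt_trans ht hx.1
    rw [hinter, setLIntegral_congr (MeasureTheory.Ioo_ae_eq_Ioc (a := t) (b := β))]
    have hint : IntegrableOn (fun h => Real.exp (-h)) (Set.Ioc t β) :=
      Continuous.integrableOn_Ioc (Real.continuous_exp.comp continuous_neg)
    rw [← ofReal_integral_eq_lintegral_ofReal hint
      (Filter.Eventually.of_forall fun x => (Real.exp_pos _).le), int_exp_Ioc htβ.le]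
  rw [h1, h2, ← ENNReal.ofReal_mul]
  have h2' : Real.exp (-τ) ≤ 1 := Real.exp_le_one_iff.2 (by linarith)
  have h3 : 0 ≤ (1 - Real.exp (-τ)) ^ M := pow_nonneg (by linarith) M
  have h4 : (1 - Real.exp (-τ)) ^ M ≤ 1 := pow_le_one₀ (by linarith) (by nlinarith [Real.exp_pos (-τ)])
  linarith

theorem joint_prob_max_exp_random_threshold
    {Ω : Type*} [MeasurableSpace Ω] (P : Measure Ω) [IsProbabilityMeasure P]
    (M : ℕ) (hM : 0 < M) (m H : Ω → ℝ) (hm : Measurable m) (hH : Measurable H)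
    (hindep : IndepFun m H P)
    (hmcdf : ∀ x : ℝ, 0 ≤ x → (P {ω | m ω ≤ x}).toReal = (1 - Real.exp (-x)) ^ M)
    (hHtail : ∀ x : ℝ, 0 ≤ x → (P {ω | x < H ω}).toReal = Real.exp (-x))
    (τ c q t : ℝ) (hτ : 0 < τ) (hc : 0 < c) (hq : 0 < q) (ht : 0 < t) :
    (τ / (c * q) - 1 / q > t →
      (P {ω | c * (1 + q * H ω) < m ω ∧ τ < c * (1 + q * H ω) ∧ t < H ω}).toReal
          + (P {ω | τ < m ω ∧ c * (1 + q * H ω) < τ ∧ t < H ω}).toReal =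
        Real.exp (-(max t (τ / (c * q) - 1 / q)))
          - (∑ k ∈ Finset.range (M + 1),
              (M.choose k : ℝ) * (-1) ^ k * Real.exp (-(k : ℝ) * c) *
                Real.exp (-(1 + (k : ℝ) * c * q) * max t (τ / (c * q) - 1 / q)) /
                  (1 + (k : ℝ) * c * q))
          + (1 - (1 - Real.exp (-τ)) ^ M) *
              (Real.exp (-t) - Real.exp (-(τ / (c * q) - 1 / q)))) ∧
    (τ / (c * q) - 1 / q ≤ t →
      (P {ω | c * (1 + q * H ω) < m ω ∧ τ < c * (1 + q * H ω) ∧ t < H ω}).toReal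
          + (P {ω | τ < m ω ∧ c * (1 + q * H ω) < τ ∧ t < H ω}).toReal =
        Real.exp (-(max t (τ / (c * q) - 1 / q)))
          - (∑ k ∈ Finset.range (M + 1),
              (M.choose k : ℝ) * (-1) ^ k * Real.exp (-(k : ℝ) * c) *
                Real.exp (-(1 + (k : ℝ) * c * q) * max t (τ / (c * q) - 1 / q)) /
                  (1 + (k : ℝ) * c * q))) := by
  set β : ℝ := τ / (c * q) - 1 / q with hβ
  set θ : ℝ := max t β with hθdef
  have hθ : 0 < θ := lt_of_lt_of_le ht (le_max_left _ _)
  have hcq : 0 < c * q := mul_pos hc hq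
  have key : ∀ h : ℝ, τ < c * (1 + q * h) ↔ β < h := by
    intro h
    have : β < h ↔ τ < c * (1 + q * h) := by
      rw [hβ, sub_lt_iff_lt_add, div_lt_iff₀ hcq,
        show (h + 1/q) * (c*q) = c * (1 + q * h) from by field_simp; ring]
    exact this.symm
  have key2 : ∀ h : ℝ, c * (1 + q * h) < τ ↔ h < β := by
    intro h
    have : h < β ↔ c * (1 + q * h) < τ := by
      rw [hβ, lt_sub_iff_add_lt, lt_div_iff₀ hcq,
        show (h + 1/q) * (c*q) = c * (1 + q * h) from by field_simp; ring]
    exact this.symm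
  have hset1 : {ω | c * (1 + q * H ω) < m ω ∧ τ < c * (1 + q * H ω) ∧ t < H ω}
      = {ω | c * (1 + q * H ω) < m ω ∧ θ < H ω} := by
    ext ω
    simp only [Set.mem_setOf_eq, key, hθdef, max_lt_iff]
    tauto
  have hnn : ∀ h ∈ Set.Ioi θ, 0 ≤ (1 - (1 - Real.exp (-(c*(1+q*h)))) ^ M) * Real.exp (-h) := by
    intro h hh
    have hh' : (0:ℝ) < h := lt_trans hθ hh
    have h2 : Real.exp (-(c*(1+q*h))) ≤ 1 := Real.exp_le_one_iff.2 (by nlinarith)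
    have h3 : (0:ℝ) < Real.exp (-(c*(1+q*h))) := Real.exp_pos _
    have h4 : (1 - Real.exp (-(c*(1+q*h)))) ^ M ≤ 1 := pow_le_one₀ (by linarith) (by linarith)
    have := (Real.exp_pos (-h)).le
    nlinarith
  have hfirst : (P {ω | c * (1 + q * H ω) < m ω ∧ τ < c * (1 + q * H ω) ∧ t < H ω}).toReal
      = Real.exp (-θ)
        - ∑ k ∈ Finset.range (M + 1),
            (M.choose k : ℝ) * (-1) ^ k * Real.exp (-(k : ℝ) * c) *
              Real.exp (-(1 + (k : ℝ) * c * q) * θ) / (1 + (k : ℝ) * c * q) := by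
    rw [hset1, prob1 P M m H hm hH hindep hmcdf hHtail c q θ hc hq hθ,
      ENNReal.toReal_ofReal (setIntegral_nonneg measurableSet_Ioi hnn),
      main_integral M c q θ hc hq]
  constructor
  · intro hcase
    have hset2 : {ω | τ < m ω ∧ c * (1 + q * H ω) < τ ∧ t < H ω}
        = {ω | τ < m ω ∧ t < H ω ∧ H ω < β} := by
      ext ω
      simp only [Set.mem_setOf_eq, key2]
      tauto
    have hsecond : (P {ω | τ < m ω ∧ c * (1 + q * H ω) < τ ∧ t < H ω}).toReal
        = (1 - (1 - Real.exp (-τ)) ^ M) * (Real.exp (-t) - Real.exp (-β)) := by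
      rw [hset2, prob2 P M m H hm hH hindep hmcdf hHtail τ t β hτ ht hcase]
      apply ENNReal.toReal_ofReal
      have h2' : Real.exp (-τ) ≤ 1 := Real.exp_le_one_iff.2 (by linarith)
      have h4 : (1 - Real.exp (-τ)) ^ M ≤ 1 :=
        pow_le_one₀ (by linarith) (by nlinarith [Real.exp_pos (-τ)])
      have h5 : Real.exp (-β) ≤ Real.exp (-t) := Real.exp_le_exp.2 (by linarith)
      nlinarith
    rw [hfirst, hsecond]
  · intro hcase
    have hset2 : {ω | τ < m ω ∧ c * (1 + q * H ω) < τ ∧ t < H ω} = (∅ : Set Ω) := by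
      ext ω
      simp only [Set.mem_setOf_eq, key2, Set.mem_empty_iff_false, iff_false]
      rintro ⟨-, h1, h2⟩
      linarith
    rw [hfirst, hset2]
    simp
end

section
/- For fixed ε₀ > 0, τ > 0, P̄ > 0, M ≥ 1, as P₀ → ∞ the quantity P₀ · 𝔓(P₀), where 𝔓(P₀) = (1 − e^{−Mτ})(1 − e^{−ε₀/P₀}) − e^{−Mτ}(e^{−ε₀/P₀} − e^{−ε₀(1+P̄τ)/P₀}) + e^{M/P̄}(e^{−(1+M P₀/(P̄ε₀))ε₀/P₀} − e^{−(1+MP₀/(P̄ε₀))ε₀(1+P̄τ)/P₀})/(1+MP₀/(P̄ε₀)) + e^{−Mτ}(1 − e^{−ε₀/P₀}), converges to ε₀ + ε₀P̄((1 − e^{−Mτ})/M − τe^{−Mτ}). -/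
/-!
Write `E = e^{-Mτ}` and `c = ε₀(1 + P̄τ)`. The factor `e^{M/P̄}` cancels the part of the exponents
in the third term that does not decay, so for `P₀ ≠ 0` the expression equals
`P₀(1 - e^{-ε₀/P₀}) - E(P₀(1 - e^{-c/P₀}) - P₀(1 - e^{-ε₀/P₀}))
  + (e^{-ε₀/P₀} - E e^{-c/P₀}) · P₀/(1 + (M/(P̄ε₀)) P₀)`.
Each piece has an elementary limit: `x(1 - e^{-c/x}) → c` (the derivative of `1 - e^{-ct}` at `0`),
`e^{-c/x} → 1` and `x/(1 + kx) → 1/k`.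
-/

open Real Filter Topology

theorem tendsto_mul_one_sub_exp_neg_div_atTop (c : ℝ) :
    Tendsto (fun x : ℝ => x * (1 - exp (-c / x))) atTop (𝓝 c) := by
  have hderiv : HasDerivAt (fun t : ℝ => 1 - exp (-c * t)) c 0 := by
    simpa using (((hasDerivAt_id (0 : ℝ)).const_mul (-c)).exp.const_sub 1)
  refine (hderiv.tendsto_slope_zero_right.comp tendsto_inv_atTop_nhdsGT_zero).congr fun x => ?_
  simp [div_eq_mul_inv]

theorem tendsto_exp_neg_div_atTop (c : ℝ) :
    Tendsto (fun x : ℝ => exp (-c / x)) atTop (𝓝 1) := by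
  simpa using (tendsto_const_nhds (x := -c)).div_atTop tendsto_id |>.rexp

theorem tendsto_div_one_add_mul_atTop {k : ℝ} (hk : k ≠ 0) :
    Tendsto (fun x : ℝ => x / (1 + k * x)) atTop (𝓝 k⁻¹) := by
  have h : Tendsto (fun x : ℝ => (x⁻¹ + k)⁻¹) atTop (𝓝 k⁻¹) := by
    simpa using (tendsto_inv_atTop_zero.add_const k).inv₀ (by simpa using hk)
  refine h.congr' ?_
  filter_upwards [eventually_ne_atTop 0] with x hx
  rw [← inv_div]
  field_simp

theorem type1_dcc_outage_asymptotics_general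
    (ε₀ τ Pb : ℝ) (hε : 0 < ε₀) (hPb : 0 < Pb) (M : ℕ) (hM : 1 ≤ M) :
    Tendsto (fun P₀ : ℝ =>
        P₀ * ((1 - exp (-(M : ℝ) * τ)) * (1 - exp (-ε₀ / P₀))
          - exp (-(M : ℝ) * τ) * (exp (-ε₀ / P₀) - exp (-ε₀ * (1 + Pb * τ) / P₀))
          + exp ((M : ℝ) / Pb) *
              (exp (-(1 + (M : ℝ) * P₀ / (Pb * ε₀)) * ε₀ / P₀)
                - exp (-(1 + (M : ℝ) * P₀ / (Pb * ε₀)) * (ε₀ * (1 + Pb * τ)) / P₀)) /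
            (1 + (M : ℝ) * P₀ / (Pb * ε₀))
          + exp (-(M : ℝ) * τ) * (1 - exp (-ε₀ / P₀))))
      atTop
      (nhds (ε₀ + ε₀ * Pb * ((1 - exp (-(M : ℝ) * τ)) / (M : ℝ) - τ * exp (-(M : ℝ) * τ)))) := by
  have hM₀ : (M : ℝ) ≠ 0 := by exact_mod_cast Nat.one_le_iff_ne_zero.mp hM
  set E := exp (-(M : ℝ) * τ)
  set c := ε₀ * (1 + Pb * τ)
  have hlim := ((tendsto_mul_one_sub_exp_neg_div_atTop ε₀).sub
      (((tendsto_mul_one_sub_exp_neg_div_atTop c).sub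
        (tendsto_mul_one_sub_exp_neg_div_atTop ε₀)).const_mul E)).add
    (((tendsto_exp_neg_div_atTop ε₀).sub ((tendsto_exp_neg_div_atTop c).const_mul E)).mul
      (tendsto_div_one_add_mul_atTop (k := M / (Pb * ε₀)) (by positivity)))
  convert hlim using 2 with P
  · rcases eq_or_ne P 0 with rfl | hP
    · simp
    have hfirst : exp (M / Pb) * exp (-(1 + M * P / (Pb * ε₀)) * ε₀ / P) = exp (-ε₀ / P) := by
      rw [← exp_add]; congr 1; field_simp; ring
    have hsecond : exp (M / Pb) * exp (-(1 + M * P / (Pb * ε₀)) * c / P) = E * exp (-c / P) := by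
      rw [← exp_add, ← exp_add]; congr 1; simp only [c]; field_simp; ring
    have hc : -ε₀ * (1 + Pb * τ) / P = -c / P := by simp only [c]; ring
    rw [hc, mul_sub (exp (M / Pb)), hfirst, hsecond, div_mul_eq_mul_div _ _ P]
    ring
  · simp only [c]; field_simp; ring

theorem type1_dcc_outage_asymptotics
    (ε₀ τ Pb : ℝ) (hε : 0 < ε₀) (hτ : 0 < τ) (hPb : 0 < Pb) (M : ℕ) (hM : 1 ≤ M) :
    Tendsto (fun P₀ : ℝ =>
        P₀ * ((1 - exp (-(M : ℝ) * τ)) * (1 - exp (-ε₀ / P₀))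
          - exp (-(M : ℝ) * τ) * (exp (-ε₀ / P₀) - exp (-ε₀ * (1 + Pb * τ) / P₀))
          + exp ((M : ℝ) / Pb) *
              (exp (-(1 + (M : ℝ) * P₀ / (Pb * ε₀)) * ε₀ / P₀)
                - exp (-(1 + (M : ℝ) * P₀ / (Pb * ε₀)) * (ε₀ * (1 + Pb * τ)) / P₀)) /
            (1 + (M : ℝ) * P₀ / (Pb * ε₀))
          + exp (-(M : ℝ) * τ) * (1 - exp (-ε₀ / P₀))))
      atTop
      (nhds (ε₀ + ε₀ * Pb * ((1 - exp (-(M : ℝ) * τ)) / (M : ℝ) - τ * exp (-(M : ℝ) * τ)))) :=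
  type1_dcc_outage_asymptotics_general ε₀ τ Pb hε hPb M hM
end
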